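/- arXiv:math/0611119 — 3 statements merged into one kernel-verified Lean document; each statement's English description precedes it below -/
import Mathlib

section
/- With σ = (λ₊ + 1)/(1 - η), where λ₊ = (-(ε+1) + √((ε+1)² - 4εη))/(2ε), we have 1 < σ < (1-η)⁻¹. -/
theorem sigma_bounds (ε η : ℝ) (hε : 0 < ε) (hη0 : 0 < η) (hη1 : η < 1) :
    let lamP := (-(ε+1) + Real.sqrt ((ε+1)^2 - 4*ε*η)) / (2*ε)
    let σ := (lamP + 1) / (1 - η)
    1 < σ ∧ σ < (1 - η)⁻¹ := by
  intro lamP σ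
  have hD : (0:ℝ) ≤ (ε+1)^2 - 4*ε*η := by nlinarith [sq_nonneg (ε - 1)]
  set s := Real.sqrt ((ε+1)^2 - 4*ε*η) with hs
  have hs0 : 0 ≤ s := Real.sqrt_nonneg _
  have hs2 : s^2 = (ε+1)^2 - 4*ε*η := Real.sq_sqrt hD
  have hsub : s < ε + 1 := by nlinarith
  have hslb : ε + 1 - 2*ε*η < s := by nlinarith [mul_pos hε hη0, mul_pos (mul_pos hε hη0) (sub_pos.mpr hη1)]
  have hlam0 : lamP < 0 := by
    have : -(ε+1) + s < 0 := by linarith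
    exact div_neg_of_neg_of_pos this (by linarith)
  have hlamη : -η < lamP := by
    rw [show lamP = (-(ε+1) + s) / (2*ε) from rfl, lt_div_iff₀ (by linarith : (0:ℝ) < 2*ε)]
    nlinarith
  have h1η : (0:ℝ) < 1 - η := by linarith
  constructor
  · rw [show σ = (lamP + 1) / (1 - η) from rfl, lt_div_iff₀ h1η]
    linarith
  · rw [show σ = (lamP + 1) / (1 - η) from rfl, div_lt_iff₀ h1η, inv_mul_cancel₀ (ne_of_gt h1η)]
    linarith
end

section
/- The function u(c) = cK(c) = c(1 + ε(1-η)c)/(1 + εc) is strictly increasing on (0,∞), satisfies u(σ) = 1, u(c) ∈ (0,1) for c ∈ (0,σ), and u(c) ∈ (1,∞) for c ∈ (σ,∞). -/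
/-!
For `a, b ≥ 0` the map `c ↦ c (1 + a c) / (1 + b c)` is strictly increasing on `(0, ∞)`, since
`y (1 + a y)(1 + b x) - x (1 + a x)(1 + b y) = (y - x)(1 + a (x + y) + a b x y)`.
It takes the value `1` exactly at the positive root of `a c² + (1 - b) c - 1`. With `a = ε(1 - η)`,
`b = ε`, the substitution `λ = (1 - η) c - 1` turns this quadratic into `(ελ² + (ε + 1)λ + η)/(1 - η)`,
whose larger root `λ₊` exceeds `-1` because `(ε + 1)² - 4εη - (1 - ε)² = 4ε(1 - η) > 0`;
so `σ > 0` and `u(σ) = 1`.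
-/

open Set

section RationalMap

variable {a b : ℝ}

theorem strictMonoOn_mul_div_one_add_mul (ha : 0 ≤ a) (hb : 0 ≤ b) :
    StrictMonoOn (fun c : ℝ => c * ((1 + a * c) / (1 + b * c))) (Ioi 0) := by
  intro x (hx : 0 < x) y (hy : 0 < y) hxy
  have hbx : 0 < 1 + b * x := by positivity
  have hby : 0 < 1 + b * y := by positivity
  simp only [mul_div_assoc']
  rw [div_lt_div_iff₀ hbx hby, ← sub_pos]
  have hfactor : 0 < 1 + a * (x + y) + a * b * x * y := by positivity
  calc (0 : ℝ) < (y - x) * (1 + a * (x + y) + a * b * x * y) :=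
        mul_pos (sub_pos.mpr hxy) hfactor
    _ = y * (1 + a * y) * (1 + b * x) - x * (1 + a * x) * (1 + b * y) := by ring

theorem mul_div_one_add_mul_eq_one {c : ℝ} (hbc : 1 + b * c ≠ 0)
    (hc : a * c ^ 2 + (1 - b) * c - 1 = 0) :
    c * ((1 + a * c) / (1 + b * c)) = 1 := by
  rw [mul_div_assoc', div_eq_one_iff_eq hbc]
  linear_combination hc

end RationalMap

section Root

variable {ε η : ℝ}

theorem sq_one_sub_lt_discrim (hε : 0 < ε) (hη : η < 1) :
    (1 - ε) ^ 2 < (ε + 1) ^ 2 - 4 * ε * η := by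
  nlinarith

theorem larger_root_quadratic_eq_zero (hε : 0 < ε) (hη : η < 1) :
    let r := (-(ε + 1) + √((ε + 1) ^ 2 - 4 * ε * η)) / (2 * ε)
    ε * (r * r) + (ε + 1) * r + η = 0 := by
  intro r
  have hD : 0 ≤ (ε + 1) ^ 2 - 4 * ε * η := (sq_nonneg _).trans (sq_one_sub_lt_discrim hε hη).le
  refine (quadratic_eq_zero_iff hε.ne' ?_ r).mpr (Or.inl rfl)
  rw [discrim, Real.mul_self_sqrt hD]

theorem neg_one_lt_larger_root_quadratic (hε : 0 < ε) (hη : η < 1) :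
    -1 < (-(ε + 1) + √((ε + 1) ^ 2 - 4 * ε * η)) / (2 * ε) := by
  have hs := Real.lt_sqrt_of_sq_lt (sq_one_sub_lt_discrim hε hη)
  rw [lt_div_iff₀ (by positivity)]
  linarith

theorem quadratic_add_one_div_one_sub (hη : η < 1) {r : ℝ}
    (hr : ε * (r * r) + (ε + 1) * r + η = 0) :
    let σ := (r + 1) / (1 - η)
    ε * (1 - η) * σ ^ 2 + (1 - ε) * σ - 1 = 0 := by
  intro σ
  have hη' : 1 - η ≠ 0 := (sub_pos.mpr hη).ne'
  have hσ : r = (1 - η) * σ - 1 := by simp only [σ]; field_simp; ring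
  have : (1 - η) * (ε * (1 - η) * σ ^ 2 + (1 - ε) * σ - 1) = 0 := by
    rw [hσ] at hr
    linear_combination hr
  exact (mul_eq_zero.mp this).resolve_left hη'

end Root

theorem u_properties_general (ε η : ℝ) (hε : 0 < ε) (hη1 : η < 1) :
    let lamP := (-(ε+1) + Real.sqrt ((ε+1)^2 - 4*ε*η)) / (2*ε)
    let σ := (lamP + 1) / (1 - η)
    let u := fun c : ℝ => c * ((1 + ε*(1-η)*c) / (1 + ε*c))
    StrictMonoOn u (Set.Ioi 0) ∧
    u σ = 1 ∧
    (∀ c : ℝ, 0 < c → c < σ → u c ∈ Set.Ioo (0:ℝ) 1) ∧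
    (∀ c : ℝ, σ < c → 1 < u c) := by
  intro lamP σ u
  have ha : 0 ≤ ε * (1 - η) := (mul_pos hε (sub_pos.mpr hη1)).le
  have hmono : StrictMonoOn u (Ioi 0) := strictMonoOn_mul_div_one_add_mul ha hε.le
  have hσ : 0 < σ :=
    div_pos (by linarith [neg_one_lt_larger_root_quadratic hε hη1]) (sub_pos.mpr hη1)
  have huσ : u σ = 1 :=
    mul_div_one_add_mul_eq_one (by positivity)
      (quadratic_add_one_div_one_sub hη1 (larger_root_quadratic_eq_zero hε hη1))
  refine ⟨hmono, huσ, fun c hc hcσ => ⟨by positivity, ?_⟩, fun c hσc => ?_⟩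
  · exact huσ ▸ hmono hc hσ hcσ
  · exact huσ ▸ hmono hσ (hσ.trans hσc) hσc

theorem u_properties (ε η : ℝ) (hε : 0 < ε) (hη0 : 0 < η) (hη1 : η < 1) :
    let lamP := (-(ε+1) + Real.sqrt ((ε+1)^2 - 4*ε*η)) / (2*ε)
    let σ := (lamP + 1) / (1 - η)
    let u := fun c : ℝ => c * ((1 + ε*(1-η)*c) / (1 + ε*c))
    StrictMonoOn u (Set.Ioi 0) ∧
    u σ = 1 ∧
    (∀ c : ℝ, 0 < c → c < σ → u c ∈ Set.Ioo (0:ℝ) 1) ∧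
    (∀ c : ℝ, σ < c → 1 < u c) :=
  u_properties_general ε η hε hη1
end

section
/- ∂f/∂y(x,y) ≥ 0 for all (x,y) in the region Γ₁ = {(x,y) : x > 0, H(x) ≤ y ≤ α(x)}, where f(x,y) = (x - y - xy)/(ε(-x + (1-η)y + xy)). -/
/-!
On the region, `y ≤ α(x) < V(x)` because `σ⁻¹ > 1 - η`, so the denominator of `f` is negative and
`y ↦ f x y` is a Möbius map without pole there. The derivative of `(a + b y)/(c + d y)` is
`(b c - a d)/(c + d y)²`, and for `f` the determinant `b c - a d` equals `ε η x > 0`.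
-/

theorem hasDerivAt_affine_div_affine (a b c d y : ℝ) (hy : c + d * y ≠ 0) :
    HasDerivAt (fun y => (a + b * y) / (c + d * y)) ((b * c - a * d) / (c + d * y) ^ 2) y := by
  have hnum : HasDerivAt (fun y => a + b * y) b y := by
    simpa using ((hasDerivAt_id y).const_mul b).const_add a
  have hden : HasDerivAt (fun y => c + d * y) d y := by
    simpa using ((hasDerivAt_id y).const_mul d).const_add c
  exact (hnum.div hden hy).congr_deriv (by ring)

theorem mul_add_lt_of_le_div_add {p q x y : ℝ} (hx : 0 < x) (hp : 0 < p + x) (hpq : p < q)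
    (hy : y ≤ x / (q + x)) : y * (p + x) < x := by
  have hq : 0 < q + x := by linarith
  calc y * (p + x) ≤ x / (q + x) * (p + x) := mul_le_mul_of_nonneg_right hy hp.le
    _ < x := by
      rw [div_mul_eq_mul_div, div_lt_iff₀ hq]
      nlinarith

theorem partial_f_y_nonneg_general (ε η σ : ℝ) (hε : 0 < ε) (hη0 : 0 < η)
    (hσ1 : 1 < σ) (hσ2 : σ < (1 - η)⁻¹)
    (x y : ℝ) (hx : 0 < x) (hy2 : y ≤ x / (σ⁻¹ + x)) :
    let f := fun x y : ℝ => (x - y - x*y) / (ε * (-x + (1-η)*y + x*y))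
    0 ≤ deriv (fun y => f x y) y := by
  intro f
  have hσ0 : 0 < σ := by linarith
  have h1η : 0 < 1 - η := inv_pos.mp (hσ0.trans hσ2)
  have hση : 1 - η < σ⁻¹ := (lt_inv_comm₀ hσ0 h1η).mp hσ2
  have hV : y * (1 - η + x) < x := mul_add_lt_of_le_div_add hx (by linarith) hση hy2
  have hden : -(ε * x) + ε * (1 - η + x) * y < 0 := by nlinarith
  have hf : f x = fun y => (x + -(1 + x) * y) / (-(ε * x) + ε * (1 - η + x) * y) := by
    funext y
    simp only [f]
    ring
  rw [hf, (hasDerivAt_affine_div_affine _ _ _ _ y hden.ne).deriv]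
  have hdet : -(1 + x) * -(ε * x) - x * (ε * (1 - η + x)) = ε * η * x := by ring
  rw [hdet]
  positivity

theorem partial_f_y_nonneg (ε η σ : ℝ) (hε : 0 < ε) (hη0 : 0 < η) (hη1 : η < 1)
    (hσ1 : 1 < σ) (hσ2 : σ < (1 - η)⁻¹)
    (x y : ℝ) (hx : 0 < x) (hy1 : x / (1 + x) ≤ y) (hy2 : y ≤ x / (σ⁻¹ + x)) :
    let f := fun x y : ℝ => (x - y - x*y) / (ε * (-x + (1-η)*y + x*y))
    0 ≤ deriv (fun y => f x y) y :=
  partial_f_y_nonneg_general ε η σ hε hη0 hσ1 hσ2 x y hx hy2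
end
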